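/- arXiv:1601.03207 — 9 statements merged into one kernel-verified Lean document; each statement's English description precedes it below -/
import Mathlib

section
/- Let C be a d-dimensional uniform clutter on [n] and suppose the set of minimal generators of I(complement of C), with a given order, has linear quotients with respect to that order. If e is a simplicial maximal subcircuit of C (i.e., e is a d-subset contained in some circuit, and N[e] = e ∪ {v : e ∪ {v} ∈ C} is a clique of C), then the ideal I(complement of (C − e)) also has linear quotients, where C − e denotes the subclutter of circuits of C not containing e. -/
open Finset

variable {n : ℕ}

/-- `L` is a clique of the `d`-dimensional clutter `C`: every `(d+1)`-subset of `L` is a circuit. -/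
def IsClique (d : ℕ) (C : Finset (Finset (Fin n))) (L : Finset (Fin n)) : Prop :=
  ∀ F : Finset (Fin n), F ⊆ L → F.card = d + 1 → F ∈ C

/-- The closed neighbourhood `N[e] = e ∪ {v : e ∪ {v} ∈ C}` of a `d`-subset `e`. -/
def nbhd (C : Finset (Finset (Fin n))) (e : Finset (Fin n)) : Finset (Fin n) :=
  e ∪ Finset.univ.filter (fun v => insert v e ∈ C)

/-- `C − e`: the circuits of `C` not containing `e`. -/
def delMS (C : Finset (Finset (Fin n))) (e : Finset (Fin n)) : Finset (Finset (Fin n)) :=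
  C.filter (fun F => ¬ e ⊆ F)

/-- Successive deletions `C − e₁ − ⋯ − e_k` along a list. -/
def delList (C : Finset (Finset (Fin n))) (l : List (Finset (Fin n))) : Finset (Finset (Fin n)) :=
  l.foldl delMS C

/-- `e` is a simplicial maximal subcircuit of the `d`-clutter `C`. -/
def IsSMS (d : ℕ) (C : Finset (Finset (Fin n))) (e : Finset (Fin n)) : Prop :=
  e.card = d ∧ (∃ F ∈ C, e ⊆ F) ∧ IsClique d C (nbhd C e)

/-- `C` is chordal: a sequence of deletions of simplicial maximal subcircuits reduces `C` to `∅`. -/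
def Chordal (d : ℕ) (C : Finset (Finset (Fin n))) : Prop :=
  ∃ l : List (Finset (Fin n)),
    (∀ i : ℕ, i < l.length → IsSMS d (delList C (l.take i)) (l.getD i ∅)) ∧
    delList C l = ∅

/-- The `d`-complement of a `d`-clutter: all `(d+1)`-subsets of `[n]` not in `C`. -/
def dCompl (d : ℕ) (C : Finset (Finset (Fin n))) : Finset (Finset (Fin n)) :=
  Finset.univ.filter (fun F => F.card = d + 1 ∧ F ∉ C)

/-- The complete `d`-dimensional clutter on `[n]`. -/
def completeClutter (n d : ℕ) : Finset (Finset (Fin n)) :=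
  Finset.powersetCard (d + 1) Finset.univ

/-- A list of supports of squarefree monomials is an order of linear quotients. -/
def LinQuotOrder (l : List (Finset (Fin n))) : Prop :=
  ∀ i j : ℕ, j < i → i < l.length →
    ∃ k < i, ∃ x ∈ l.getD j ∅ \ l.getD i ∅, l.getD k ∅ \ l.getD i ∅ = {x}

/-- The squarefree monomial ideal `I(D)` has linear quotients. -/
def HasLinQuot (D : Finset (Finset (Fin n))) : Prop :=
  ∃ l : List (Finset (Fin n)), l.Nodup ∧ l.toFinset = D ∧ LinQuotOrder l

/-- `x_F ∈ I(D)` for a squarefree monomial with support `F`. -/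
def memI (D : Finset (Finset (Fin n))) (F : Finset (Fin n)) : Prop :=
  ∃ G ∈ D, G ⊆ F

/-- `I(D)` is squarefree stable. -/
def SqfreeStable (D : Finset (Finset (Fin n))) : Prop :=
  ∀ F : Finset (Fin n), memI D F → ∀ m ∈ F, (∀ x ∈ F, x ≤ m) →
    ∀ j : Fin n, j < m → j ∉ F → memI D (insert j (F.erase m))

/-- `I(D)` is squarefree strongly stable (clutter formulation). -/
def SSSClutter (D : Finset (Finset (Fin n))) : Prop :=
  ∀ F ∈ D, ∀ i ∈ F, ∀ j : Fin n, j < i → j ∉ F → ∃ F' ∈ D, F' ⊆ insert j (F.erase i)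

/-- Contraction `D/v`: minimal elements of `{F \ {v} : F ∈ D}`. -/
def contraction (D : Finset (Finset (Fin n))) (v : Fin n) : Finset (Finset (Fin n)) :=
  (D.image (fun F => F.erase v)).filter
    (fun G => ∀ H ∈ D.image (fun F => F.erase v), ¬ H ⊂ G)

/-- Two circuits of `Z` sharing a common `d`-subset. -/
def shareRel (d : ℕ) (Z : Finset (Finset (Fin n))) (A B : Finset (Fin n)) : Prop :=
  A ∈ Z ∧ B ∈ Z ∧ d ≤ (A ∩ B).card

/-- `Z` is strongly connected. -/
def StronglyConnected (d : ℕ) (Z : Finset (Finset (Fin n))) : Prop :=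
  ∀ A ∈ Z, ∀ B ∈ Z, Relation.ReflTransGen (shareRel d Z) A B

/-- Degree of a `d`-subset `e`: the number of circuits containing `e`. -/
def degC (C : Finset (Finset (Fin n))) (e : Finset (Fin n)) : ℕ :=
  (C.filter (fun F => e ⊆ F)).card

/-- `Z` is a `d`-dimensional CF-cycle. -/
def CFCycle (d : ℕ) (Z : Finset (Finset (Fin n))) : Prop :=
  Z.Nonempty ∧ StronglyConnected d Z ∧
    ∀ e : Finset (Fin n), e.card = d → (∃ F ∈ Z, e ⊆ F) → Even (degC Z e)

/-- The simplicial complex generated by a clutter: all subsets of circuits. -/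
def genComplex (C : Finset (Finset (Fin n))) : Set (Finset (Fin n)) :=
  {G | ∃ F ∈ C, G ⊆ F}

/-- Link of a vertex in a simplicial complex. -/
def linkC (Δ : Set (Finset (Fin n))) (v : Fin n) : Set (Finset (Fin n)) :=
  {G | v ∉ G ∧ insert v G ∈ Δ}

/-- Deletion `Δ \ v` of a vertex from a simplicial complex. -/
def delC (Δ : Set (Finset (Fin n))) (v : Fin n) : Set (Finset (Fin n)) :=
  {G ∈ Δ | v ∉ G}

/-- `F` is a facet of `Δ`. -/
def IsFacet (Δ : Set (Finset (Fin n))) (F : Finset (Fin n)) : Prop :=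
  F ∈ Δ ∧ ∀ G ∈ Δ, F ⊆ G → F = G

/-- `Δ` is pure: all facets have the same cardinality. -/
def IsPure (Δ : Set (Finset (Fin n))) : Prop :=
  ∀ F G : Finset (Fin n), IsFacet Δ F → IsFacet Δ G → F.card = G.card

/-- Vertex decomposability: `Δ` is a simplex, or has a shedding vertex `v` with
pure vertex decomposable link and deletion. -/
inductive VDecomp : ∀ {n : ℕ}, Set (Finset (Fin n)) → Prop
  | simplex {n : ℕ} (F : Finset (Fin n)) : VDecomp {G | G ⊆ F}
  | shed {n : ℕ} (Δ : Set (Finset (Fin n))) (v : Fin n) :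
      IsPure (linkC Δ v) → IsPure (delC Δ v) →
      VDecomp (linkC Δ v) → VDecomp (delC Δ v) → VDecomp Δ

/-- `v` is a shedding vertex of `Δ`. -/
def SheddingVertex (Δ : Set (Finset (Fin n))) (v : Fin n) : Prop :=
  IsPure (linkC Δ v) ∧ IsPure (delC Δ v) ∧ VDecomp (linkC Δ v) ∧ VDecomp (delC Δ v)

/-- The simple graph whose edges are the 2-element circuits of a 1-dimensional clutter. -/
def graphOf (C : Finset (Finset (Fin n))) : SimpleGraph (Fin n) where
  Adj u v := u ≠ v ∧ ({u, v} : Finset (Fin n)) ∈ C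
  symm := ⟨fun u v h => ⟨h.1.symm, by rw [Finset.pair_comm]; exact h.2⟩⟩
  loopless := ⟨fun v h => h.1 rfl⟩

/-- The graph `C` is connected (on the vertices it covers). -/
def ConnectedClutter (C : Finset (Finset (Fin n))) : Prop :=
  ∀ u v : Fin n, (∃ F ∈ C, u ∈ F) → (∃ F ∈ C, v ∈ F) →
    Relation.ReflTransGen (graphOf C).Adj u v

/-- The graph `C` is a tree: connected and acyclic. -/
def IsTreeClutter (C : Finset (Finset (Fin n))) : Prop :=
  ConnectedClutter C ∧ (graphOf C).IsAcyclic

/-- `A` is a vertex cover of the graph `G`. -/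
def IsVC (G : SimpleGraph (Fin n)) (A : Finset (Fin n)) : Prop :=
  ∀ u v : Fin n, G.Adj u v → u ∈ A ∨ v ∈ A

/-- `A` is a minimal vertex cover of `G`. -/
def IsMinVC (G : SimpleGraph (Fin n)) (A : Finset (Fin n)) : Prop :=
  IsVC G A ∧ ∀ B ⊂ A, ¬ IsVC G B

/-- The boundary `∂(C)`: the `d`-subsets of odd degree. -/
def boundary (d : ℕ) (C : Finset (Finset (Fin n))) : Finset (Finset (Fin n)) :=
  Finset.univ.filter (fun e => e.card = d ∧ Odd (degC C e))

/-- Subclutter of `Z` induced by a set `M` of maximal subcircuits. -/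
def msInduced (d : ℕ) (Z : Finset (Finset (Fin n))) (M : Finset (Finset (Fin n))) :
    Finset (Finset (Fin n)) :=
  Z.filter (fun F => ∀ e : Finset (Fin n), e ⊆ F → e.card = d → e ∈ M)

/-- Subclutter of `Z` induced by a set `A` of vertices. -/
def vtxInduced (Z : Finset (Finset (Fin n))) (A : Finset (Fin n)) :
    Finset (Finset (Fin n)) :=
  Z.filter (fun F => F ⊆ A)

/-- `Z` is a C₁-cycle. -/
def IsC1Cycle (d : ℕ) (Z : Finset (Finset (Fin n))) : Prop :=
  (∃ A : Finset (Fin n), A.card = d + 2 ∧ Z = Finset.powersetCard (d + 1) A) ∨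
  ((¬ ∃ e, IsSMS d Z e) ∧
    ∀ Z' ⊆ Z, Z' ≠ Z → Z'.Nonempty → ∃ e, IsSMS d Z' e)

/-- `Z` is a C₂-cycle. -/
def IsC2Cycle (d : ℕ) (Z : Finset (Finset (Fin n))) : Prop :=
  (∃ A : Finset (Fin n), A.card = d + 2 ∧ Z = Finset.powersetCard (d + 1) A) ∨
  ((¬ ∃ e, IsSMS d Z e) ∧
    ∀ M : Finset (Finset (Fin n)), msInduced d Z M ≠ Z → (msInduced d Z M).Nonempty →
      ∃ e, IsSMS d (msInduced d Z M) e)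

/-- `Z` is a C₃-cycle. -/
def IsC3Cycle (d : ℕ) (Z : Finset (Finset (Fin n))) : Prop :=
  (∃ A : Finset (Fin n), A.card = d + 2 ∧ Z = Finset.powersetCard (d + 1) A) ∨
  ((¬ ∃ e, IsSMS d Z e) ∧
    ∀ A : Finset (Fin n), vtxInduced Z A ≠ Z → (vtxInduced Z A).Nonempty →
      ∃ e, IsSMS d (vtxInduced Z A) e)

/-- `Z` is a C_i-cycle, `i ∈ {1,2,3}`. -/
def CiCycle (i d : ℕ) (Z : Finset (Finset (Fin n))) : Prop :=
  match i with
  | 1 => IsC1Cycle d Z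
  | 2 => IsC2Cycle d Z
  | 3 => IsC3Cycle d Z
  | _ => False

theorem stmt2 (n d : ℕ) (C : Finset (Finset (Fin n)))
    (hC : ∀ F ∈ C, F.card = d + 1)
    (hlq : HasLinQuot (dCompl d C))
    (e : Finset (Fin n)) (he : IsSMS d C e) :
    HasLinQuot (dCompl d (delMS C e)) := by
  classical
  obtain ⟨l0, hnd0, htf0, hlq0⟩ := hlq
  obtain ⟨hecard, -, hclique⟩ := he
  set N := C.filter (fun F => e ⊆ F) with hN
  have memN : ∀ F, F ∈ N ↔ F ∈ C ∧ e ⊆ F := by intro F; simp [hN]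
  set l1 := N.toList with hl1
  have meml1 : ∀ F, F ∈ l1 ↔ F ∈ N := by intro F; simp [hl1]
  have meml0 : ∀ F, F ∈ l0 ↔ F ∈ dCompl d C := by
    intro F; rw [← htf0]; simp
  have memDC : ∀ F : Finset (Fin n), F ∈ dCompl d C ↔ F.card = d + 1 ∧ F ∉ C := by
    intro F; simp [dCompl]
  -- every member of N is insert v e for some v ∉ F's complement
  have hNcard : ∀ F ∈ N, F.card = d + 1 ∧ e ⊆ F := by
    intro F hFN
    obtain ⟨h1, h2⟩ := (memN F).1 hFN
    exact ⟨hC F h1, h2⟩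
  have hsdiff : ∀ F ∈ N, (F \ e).card = 1 := by
    intro F hFN
    obtain ⟨hc, hs⟩ := hNcard F hFN
    rw [Finset.card_sdiff_of_subset hs, hc, hecard]; omega
  -- F ⊆ nbhd C e for F ∈ N
  have hsubnb : ∀ F ∈ N, F ⊆ nbhd C e := by
    intro F hFN g hg
    obtain ⟨hFC, hs⟩ := (memN F).1 hFN
    by_cases hge : g ∈ e
    · exact Finset.mem_union_left _ hge
    · refine Finset.mem_union_right _ ?_
      rw [Finset.mem_filter]
      refine ⟨Finset.mem_univ _, ?_⟩
      have : insert g e = F := by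
        obtain ⟨v, hv⟩ := Finset.card_eq_one.1 (hsdiff F hFN)
        have hgv : g ∈ F \ e := Finset.mem_sdiff.2 ⟨hg, hge⟩
        rw [hv, Finset.mem_singleton] at hgv
        subst hgv
        have := Finset.union_sdiff_of_subset hs
        rw [hv] at this
        rw [← this]
        ext a; simp [Finset.mem_insert, Finset.mem_union, or_comm]
      rw [this]; exact hFC
  refine ⟨l0 ++ l1, ?_, ?_, ?_⟩
  · rw [List.nodup_append]
    refine ⟨hnd0, N.nodup_toList, ?_⟩
    intro a ha b ha1 hab
    rw [← hab] at ha1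
    have h0 := (memDC a).1 ((meml0 a).1 ha)
    exact h0.2 ((memN a).1 ((meml1 a).1 ha1)).1
  · rw [List.toFinset_append, htf0]
    ext F
    rw [Finset.mem_union, List.mem_toFinset, meml1, memN, memDC]
    have memDC2 : F ∈ dCompl d (delMS C e) ↔ F.card = d + 1 ∧ ¬(F ∈ C ∧ ¬ e ⊆ F) := by
      simp only [dCompl, delMS, Finset.mem_filter, Finset.mem_univ, true_and]
    rw [memDC2]
    constructor
    · rintro (⟨hc, hnc⟩ | ⟨hFC, hs⟩)
      · exact ⟨hc, fun h => hnc h.1⟩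
      · exact ⟨hC F hFC, fun h => h.2 hs⟩
    · rintro ⟨hc, hnm⟩
      by_cases hFC : F ∈ C
      · right; refine ⟨hFC, ?_⟩
        by_contra hs
        exact hnm ⟨hFC, hs⟩
      · left; exact ⟨hc, hFC⟩
  · intro i j hji hi
    rw [List.length_append] at hi
    by_cases hi0 : i < l0.length
    · -- both old
      have hj0 : j < l0.length := lt_trans hji hi0
      obtain ⟨k, hk, x, hx, hkx⟩ := hlq0 i j hji hi0
      refine ⟨k, hk, x, ?_, ?_⟩
      · rwa [List.getD_append _ _ _ _ hj0, List.getD_append _ _ _ _ hi0]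
      · rwa [List.getD_append _ _ _ _ (lt_trans hk hi0), List.getD_append _ _ _ _ hi0]
    · push_neg at hi0
      have hi1 : i - l0.length < l1.length := by omega
      have hFi : (l0 ++ l1).getD i ∅ ∈ N := by
        rw [List.getD_append_right _ _ _ _ hi0, List.getD_eq_getElem _ _ hi1]
        exact (meml1 _).1 (List.getElem_mem hi1)
      set F := (l0 ++ l1).getD i ∅ with hFdef
      obtain ⟨hFcard, hFe⟩ := hNcard F hFi
      have hFC : F ∈ C := ((memN F).1 hFi).1
      by_cases hj0 : j < l0.length
      · -- G old, F new
        set G := (l0 ++ l1).getD j ∅ with hGdef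
        have hGmem : G ∈ dCompl d C := by
          rw [hGdef, List.getD_append _ _ _ _ hj0, List.getD_eq_getElem _ _ hj0]
          exact (meml0 _).1 (List.getElem_mem hj0)
        obtain ⟨hGcard, hGC⟩ := (memDC G).1 hGmem
        -- find x ∈ G \ F with insert x e ∉ C
        have hGF : ¬ G ⊆ F := by
          intro hsub
          have : G = F := Finset.eq_of_subset_of_card_le hsub (by omega)
          exact hGC (this ▸ hFC)
        have hkey : ∃ x ∈ G \ F, insert x e ∉ C := by
          by_contra hcon
          push_neg at hcon
          have hGnb : G ⊆ nbhd C e := by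
            intro g hg
            by_cases hgF : g ∈ F
            · exact hsubnb F hFi hgF
            · have hin := hcon g (Finset.mem_sdiff.2 ⟨hg, hgF⟩)
              exact Finset.mem_union_right _
                (Finset.mem_filter.2 ⟨Finset.mem_univ _, hin⟩)
          exact hGC (hclique G hGnb hGcard)
        obtain ⟨x, hxGF, hxC⟩ := hkey
        have hxF : x ∉ F := (Finset.mem_sdiff.1 hxGF).2
        have hxe : x ∉ e := fun h => hxF (hFe h)
        have hKcard : (insert x e).card = d + 1 := by
          rw [Finset.card_insert_of_notMem hxe, hecard]
        have hKmem : insert x e ∈ l0 := (meml0 _).2 ((memDC _).2 ⟨hKcard, hxC⟩)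
        obtain ⟨k, hk, hkeq⟩ := List.mem_iff_getElem.1 hKmem
        refine ⟨k, by omega, x, hxGF, ?_⟩
        rw [List.getD_append _ _ _ _ hk, List.getD_eq_getElem _ _ hk, hkeq]
        ext a
        simp only [Finset.mem_sdiff, Finset.mem_insert, Finset.mem_singleton]
        constructor
        · rintro ⟨(rfl | hae), haF⟩
          · rfl
          · exact absurd (hFe hae) haF
        · rintro rfl; exact ⟨Or.inl rfl, hxF⟩
      · -- both new
        push_neg at hj0
        have hj1 : j - l0.length < l1.length := by omega
        set G := (l0 ++ l1).getD j ∅ with hGdef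
        have hGmem : G ∈ N := by
          rw [hGdef, List.getD_append_right _ _ _ _ hj0, List.getD_eq_getElem _ _ hj1]
          exact (meml1 _).1 (List.getElem_mem hj1)
        obtain ⟨hGcard, hGe⟩ := hNcard G hGmem
        have hGneF : G ≠ F := by
          intro hEq
          have h1 : l1[j - l0.length] = l1[i - l0.length] := by
            have hg : G = l1[j - l0.length] := by
              rw [hGdef, List.getD_append_right _ _ _ _ hj0, List.getD_eq_getElem _ _ hj1]
            have hf : F = l1[i - l0.length] := by
              rw [hFdef, List.getD_append_right _ _ _ _ hi0, List.getD_eq_getElem _ _ hi1]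
            rw [← hg, ← hf, hEq]
          have := (N.nodup_toList.getElem_inj_iff).1 h1
          omega
        have hGF : ¬ G ⊆ F := by
          intro hsub
          exact hGneF (Finset.eq_of_subset_of_card_le hsub (by omega))
        obtain ⟨w, hw⟩ := Finset.not_subset.1 hGF
        have hwGF : w ∈ G \ F := Finset.mem_sdiff.2 hw
        refine ⟨j, hji, w, hwGF, ?_⟩
        -- G \ F = {w} since G \ F ⊆ G \ e which has card 1
        have hsub1 : G \ F ⊆ G \ e := Finset.sdiff_subset_sdiff (le_refl G) hFe
        have hc1 : (G \ F).card ≤ 1 := by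
          have := Finset.card_le_card hsub1
          rw [hsdiff G hGmem] at this
          exact this
        have : G \ F = {w} :=
          Finset.eq_singleton_iff_unique_mem.2 ⟨hwGF, fun y hy => by
            by_contra hne
            have : ({w, y} : Finset (Fin n)) ⊆ G \ F := by
              intro a ha
              rcases Finset.mem_insert.1 ha with rfl | ha
              · exact hwGF
              · rw [Finset.mem_singleton] at ha; subst ha; exact hy
            have h2 := Finset.card_le_card this
            rw [Finset.card_insert_of_notMem (by simp [Ne.symm hne]),
              Finset.card_singleton] at h2
            omega⟩
        exact this
end

section
/- Let C be the complete d-dimensional clutter on [n] (all (d+1)-subsets of [n]) and let e_1,...,e_t be distinct d-subsets of [n]. Then the following are equivalent: (a) for each i ∈ [t], the d-set e_i satisfies that N[e_i] is a clique in the clutter C_{i-1} = C − e_1 − ... − e_{i-1}; (b) the sequence x_{e_1},...,x_{e_t} is an order of linear quotients for the ideal generated by x_{e_1},...,x_{e_t}. -/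
open Finset

variable {n : ℕ}

lemma mem_delList' {n : ℕ} {C : Finset (Finset (Fin n))} {l : List (Finset (Fin n))}
    {F : Finset (Fin n)} : F ∈ delList C l ↔ F ∈ C ∧ ∀ e ∈ l, ¬ e ⊆ F := by
  induction l generalizing C with
  | nil => simp [delList]
  | cons a t ih =>
    show F ∈ delList (delMS C a) t ↔ _
    rw [ih]
    simp only [delMS, Finset.mem_filter, List.mem_cons]
    constructor
    · rintro ⟨⟨h1, h2⟩, h3⟩
      exact ⟨h1, by rintro e (rfl | he); exact h2; exact h3 e he⟩
    · rintro ⟨h1, h2⟩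
      exact ⟨⟨h1, h2 a (Or.inl rfl)⟩, fun e he => h2 e (Or.inr he)⟩

lemma mem_completeClutter' {n d : ℕ} {F : Finset (Fin n)} :
    F ∈ completeClutter n d ↔ F.card = d + 1 := by
  simp [completeClutter, Finset.mem_powersetCard]

theorem stmt3 (n d : ℕ) (l : List (Finset (Fin n)))
    (hcard : ∀ e ∈ l, e.card = d) (hnd : l.Nodup) :
    (∀ i : ℕ, i < l.length →
        IsClique d (delList (completeClutter n d) (l.take i))
          (nbhd (delList (completeClutter n d) (l.take i)) (l.getD i ∅))) ↔
    LinQuotOrder l := by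
  -- notation
  have hmem : ∀ {i : ℕ}, i < l.length → l.getD i ∅ ∈ l := by
    intro i hi
    rw [List.getD_eq_getElem l ∅ hi]
    exact List.getElem_mem hi
  have htake : ∀ {i k : ℕ}, k < i → k < l.length → l.getD k ∅ ∈ l.take i := by
    intro i k hk hk'
    have hlen : k < (l.take i).length := by simp [List.length_take]; omega
    have : (l.take i)[k] = l[k] := List.getElem_take
    rw [List.getD_eq_getElem l ∅ hk', ← this]
    exact List.getElem_mem hlen
  have hinj : ∀ {i j : ℕ}, i < l.length → j < l.length → i ≠ j →
      l.getD i ∅ ≠ l.getD j ∅ := by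
    intro i j hi hj hij
    rw [List.getD_eq_getElem l ∅ hi, List.getD_eq_getElem l ∅ hj]
    intro h
    exact hij ((hnd.getElem_inj_iff).1 h)
  constructor
  · -- (a) → (b)
    intro ha i j hji hi
    have hj : j < l.length := hji.trans hi
    set ei := l.getD i ∅ with hei
    set ej := l.getD j ∅ with hej
    have hcei : ei.card = d := hcard _ (hmem hi)
    have hcej : ej.card = d := hcard _ (hmem hj)
    by_contra hcon
    push_neg at hcon
    -- ej ⊆ nbhd
    have hsubN : ∀ x ∈ ej, x ∈ nbhd (delList (completeClutter n d) (l.take i)) ei := by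
      intro x hx
      by_cases hxi : x ∈ ei
      · exact Finset.mem_union_left _ hxi
      · apply Finset.mem_union_right
        simp only [Finset.mem_filter, Finset.mem_univ, true_and]
        rw [mem_delList']
        refine ⟨mem_completeClutter'.2 (by rw [Finset.card_insert_of_notMem hxi, hcei]), ?_⟩
        intro e he hsub
        obtain ⟨k, hk, hke⟩ := List.mem_iff_getElem.1 he
        have hklen : k < l.length := lt_of_lt_of_le hk (by simp [List.length_take])
        have hki : k < i := lt_of_lt_of_le hk (by simp [List.length_take])
        have hke' : l.getD k ∅ = e := by
          rw [List.getD_eq_getElem l ∅ hklen, ← List.getElem_take (j := i) (h := hk), hke]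
        have hce : e.card = d := hcard _ (List.mem_of_mem_take he)
        -- e ⊆ insert x ei, so e \\ ei ⊆ {x}
        have hdiff : e \ ei ⊆ {x} := by
          intro y hy
          rw [Finset.mem_sdiff] at hy
          rcases Finset.mem_insert.1 (hsub hy.1) with h | h
          · exact Finset.mem_singleton.2 h
          · exact absurd h hy.2
        have hne : e ≠ ei := by
          rw [← hke']; exact hinj hklen hi (Nat.ne_of_lt hki)
        have hnonempty : (e \ ei).Nonempty := by
          rw [Finset.sdiff_nonempty]
          intro hsub'
          exact hne (Finset.eq_of_subset_of_card_le hsub' (by rw [hcei, hce]))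
        have : e \ ei = {x} := Finset.Nonempty.subset_singleton_iff hnonempty |>.1 hdiff
        exact hcon k hki x (Finset.mem_sdiff.2 ⟨hx, hxi⟩) (by rw [hke'] ; exact this)
    -- pick w ∈ ei \ ej
    have hne : ei ≠ ej := hinj hi hj (Nat.ne_of_gt hji)
    have hw : ∃ w ∈ ei, w ∉ ej := by
      rw [← Finset.not_subset]
      intro hsub
      exact hne (Finset.eq_of_subset_of_card_le hsub (by rw [hcei, hcej]))
    obtain ⟨w, hwi, hwj⟩ := hw
    have hF : insert w ej ∈ delList (completeClutter n d) (l.take i) := by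
      apply ha i hi
      · intro y hy
        rcases Finset.mem_insert.1 hy with rfl | h
        · exact Finset.mem_union_left _ hwi
        · exact hsubN y h
      · rw [Finset.card_insert_of_notMem hwj, hcej]
    rw [mem_delList'] at hF
    exact hF.2 ej (htake hji hj) (Finset.subset_insert _ _)
  · -- (b) → (a)
    intro hb i hi F hFsub hFcard
    rw [mem_delList']
    refine ⟨mem_completeClutter'.2 hFcard, ?_⟩
    intro e he hsub
    obtain ⟨k, hk, hke⟩ := List.mem_iff_getElem.1 he
    have hklen : k < l.length := lt_of_lt_of_le hk (by simp [List.length_take])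
    have hki : k < i := lt_of_lt_of_le hk (by simp [List.length_take])
    have hke' : l.getD k ∅ = e := by
      rw [List.getD_eq_getElem l ∅ hklen, ← List.getElem_take (j := i) (h := hk), hke]
    obtain ⟨m, hm, x, hx, hmx⟩ := hb i k hki hi
    have hmlen : m < l.length := hm.trans hi
    rw [hke'] at hx
    have hxF : x ∈ F := hsub (Finset.mem_sdiff.1 hx).1
    have hxi : x ∉ l.getD i ∅ := (Finset.mem_sdiff.1 hx).2
    have := hFsub hxF
    rcases Finset.mem_union.1 this with h | h
    · exact hxi h
    · simp only [Finset.mem_filter, Finset.mem_univ, true_and] at h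
      rw [mem_delList'] at h
      apply h.2 (l.getD m ∅) (htake hm hmlen)
      intro y hy
      by_cases hyi : y ∈ l.getD i ∅
      · exact Finset.mem_insert_of_mem hyi
      · have : y ∈ l.getD m ∅ \ l.getD i ∅ := Finset.mem_sdiff.2 ⟨hy, hyi⟩
        rw [hmx] at this
        exact Finset.mem_insert.2 (Or.inl (Finset.mem_singleton.1 this))
end

section
/- Let C be a nonempty d-dimensional uniform clutter on [n] such that I(complement of C) is squarefree stable. Then C is chordal: there exists a sequence e_1,...,e_t of d-subsets such that each e_i is a simplicial maximal subcircuit of C − e_1 − ... − e_{i-1} and C − e_1 − ... − e_t = ∅. -/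
open Finset

variable {n : ℕ}

/-- Auxiliary notion: `C` is closed under replacing any vertex of a circuit by a
vertex larger than all vertices of the circuit. -/
def StarClo (C : Finset (Finset (Fin n))) : Prop :=
  ∀ G ∈ C, ∀ j ∈ G, ∀ m : Fin n, (∀ x ∈ G, x < m) → insert m (G.erase j) ∈ C

lemma star_of_stable {d : ℕ} {C : Finset (Finset (Fin n))}
    (hC : ∀ F ∈ C, F.card = d + 1) (hst : SqfreeStable (dCompl d C)) :
    StarClo C := by
  intro G hG j hj m hm
  by_contra hF
  have hmG : m ∉ G := fun h => lt_irrefl m (hm m h)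
  have hmGe : m ∉ G.erase j := fun h => hmG (Finset.mem_of_mem_erase h)
  set F : Finset (Fin n) := insert m (G.erase j) with hFdef
  have hcardF : F.card = d + 1 := by
    rw [hFdef, Finset.card_insert_of_notMem hmGe, Finset.card_erase_of_mem hj, hC G hG]; omega
  have hFD : F ∈ dCompl d C := by
    simp only [dCompl, Finset.mem_filter, Finset.mem_univ, true_and]
    exact ⟨hcardF, hF⟩
  have hmem : memI (dCompl d C) F := ⟨F, hFD, subset_rfl⟩
  have hjm : j < m := hm j hj
  have hjF : j ∉ F := by
    rw [hFdef]
    simp only [Finset.mem_insert, Finset.mem_erase]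
    rintro (h | ⟨h1, _⟩)
    · exact absurd h (ne_of_lt hjm)
    · exact h1 rfl
  have hmax : ∀ x ∈ F, x ≤ m := by
    intro x hx
    rw [hFdef] at hx
    rcases Finset.mem_insert.mp hx with h | h
    · exact le_of_eq h
    · exact le_of_lt (hm x (Finset.mem_of_mem_erase h))
  have := hst F hmem m (Finset.mem_insert_self _ _) hmax j hjm hjF
  have hFe : F.erase m = G.erase j := by rw [hFdef, Finset.erase_insert hmGe]
  rw [hFe, Finset.insert_erase hj] at this
  obtain ⟨G', hG'D, hsub⟩ := this
  have hG'card : G'.card = d + 1 ∧ G' ∉ C := by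
    simpa [dCompl] using hG'D
  have : G' = G := Finset.eq_of_subset_of_card_le hsub (by rw [hC G hG, hG'card.1])
  exact hG'card.2 (this ▸ hG)

lemma closure_star {d : ℕ} {C : Finset (Finset (Fin n))}
    (hC : ∀ F ∈ C, F.card = d + 1) (hs : StarClo C) :
    ∀ (k : ℕ) (T G S : Finset (Fin n)), T.card = k → G ∈ C → S ⊆ G →
      (∀ t ∈ T, ∀ x ∈ G, x < t) → (S ∪ T).card = d + 1 → S ∪ T ∈ C := by
  intro k
  induction k with
  | zero =>
    intro T G S hT hG hSG _ hcard
    rw [Finset.card_eq_zero.mp hT, Finset.union_empty] at *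
    have : S = G :=
      Finset.eq_of_subset_of_card_le hSG (by rw [hC G hG, hcard])
    exact this ▸ hG
  | succ k ih =>
    intro T G S hT hG hSG hbig hcard
    have hTne : T.Nonempty := Finset.card_pos.mp (by omega)
    set t1 := T.min' hTne with ht1
    have ht1T : t1 ∈ T := T.min'_mem hTne
    have hdisj : Disjoint S T := by
      rw [Finset.disjoint_left]
      intro a haS haT
      exact lt_irrefl a (hbig a haT a (hSG haS))
    have hcardsum : S.card + T.card = d + 1 := by
      rw [← Finset.card_union_of_disjoint hdisj, hcard]
    have hSlt : S.card < G.card := by rw [hC G hG]; omega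
    have hSsub : S ⊂ G := hSG.ssubset_of_ne (fun h => by
      rw [h] at hSlt; omega)
    obtain ⟨j, hjG, hjS⟩ := Finset.exists_of_ssubset hSsub
    have hG1 : insert t1 (G.erase j) ∈ C :=
      hs G hG j hjG t1 (fun x hx => hbig t1 ht1T x hx)
    have hkey := ih (T.erase t1) (insert t1 (G.erase j)) (insert t1 S)
      (by rw [Finset.card_erase_of_mem ht1T, hT]; omega)
      hG1
      (by
        apply Finset.insert_subset_insert
        intro x hx
        exact Finset.mem_erase.mpr ⟨fun h => hjS (h ▸ hx), hSG hx⟩)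
      (by
        intro t ht x hx
        have htT : t ∈ T := Finset.mem_of_mem_erase ht
        have htne : t ≠ t1 := Finset.ne_of_mem_erase ht
        rcases Finset.mem_insert.mp hx with h | h
        · exact h ▸ lt_of_le_of_ne (T.min'_le t htT) (Ne.symm htne)
        · exact hbig t htT x (Finset.mem_of_mem_erase h))
      (by
        rw [Finset.insert_union, ← Finset.union_insert, Finset.insert_erase ht1T]
        exact hcard)
    rwa [Finset.insert_union, ← Finset.union_insert, Finset.insert_erase ht1T] at hkey

lemma chordal_of_star (d : ℕ) :
    ∀ (N : ℕ) (C : Finset (Finset (Fin n))), C.card ≤ N →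
      (∀ F ∈ C, F.card = d + 1) → StarClo C → Chordal d C := by
  intro N
  induction N with
  | zero =>
    intro C hcard _ _
    have : C = ∅ := Finset.card_eq_zero.mp (Nat.le_zero.mp hcard)
    subst this
    exact ⟨[], fun i hi => absurd hi (by simp), rfl⟩
  | succ N ih =>
    intro C hcard hC hs
    rcases C.eq_empty_or_nonempty with rfl | hne
    · exact ⟨[], fun i hi => absurd hi (by simp), rfl⟩
    obtain ⟨Fs, hFsC, hmin⟩ := C.exists_min_image (fun F => F.sup (fun x : Fin n => (x : ℕ))) hne
    have hFscard : Fs.card = d + 1 := hC Fs hFsC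
    have hFsne : Fs.Nonempty := Finset.card_pos.mp (by omega)
    obtain ⟨ms, hmsFs, hms⟩ := Finset.exists_mem_eq_sup Fs hFsne (fun x : Fin n => (x : ℕ))
    set e := Fs.erase ms with he
    -- every element of e has value < ms
    have helt : ∀ x ∈ e, (x : ℕ) < (ms : ℕ) := by
      intro x hx
      have hxFs : x ∈ Fs := Finset.mem_of_mem_erase hx
      have hxne : x ≠ ms := Finset.ne_of_mem_erase hx
      have hle : (x : ℕ) ≤ Fs.sup (fun x : Fin n => (x : ℕ)) :=
        Finset.le_sup hxFs
      rw [hms] at hle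
      exact lt_of_le_of_ne hle (fun h => hxne (Fin.val_injective h))
    -- every circuit has max value ≥ ms
    have hsupG : ∀ G ∈ C, (ms : ℕ) ≤ G.sup (fun x : Fin n => (x : ℕ)) := by
      intro G hG
      have := hmin G hG
      rwa [hms] at this
    -- every neighbour of e is ≥ ms
    have hnb : ∀ v : Fin n, insert v e ∈ C → ms ≤ v := by
      intro v hv
      obtain ⟨w, hw, hwsup⟩ := Finset.exists_mem_eq_sup (insert v e)
        ⟨v, Finset.mem_insert_self v e⟩ (fun x : Fin n => (x : ℕ))
      have hwge : (ms : ℕ) ≤ (w : ℕ) := by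
        have := hsupG _ hv
        rw [hwsup] at this
        exact this
      rcases Finset.mem_insert.mp hw with rfl | hwe
      · exact Fin.mk_le_mk.mpr hwge
      · exact absurd hwge (not_le.mpr (helt w hwe))
    have hSMS : IsSMS d C e := by
      refine ⟨by rw [he, Finset.card_erase_of_mem hmsFs, hFscard]; omega, ⟨Fs, hFsC, Finset.erase_subset _ _⟩, ?_⟩
      intro F hFsub hFcard
      have hT : ∀ t ∈ F \ Fs, ∀ x ∈ Fs, x < t := by
        intro t ht x hx
        have htF : t ∈ F := (Finset.mem_sdiff.mp ht).1
        have htFs : t ∉ Fs := (Finset.mem_sdiff.mp ht).2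
        have := hFsub htF
        rcases Finset.mem_union.mp this with h | h
        · exact absurd (Finset.mem_of_mem_erase h) htFs
        · have htC : insert t e ∈ C := (Finset.mem_filter.mp h).2
          have hmt : ms ≤ t := hnb t htC
          have hmst : ms < t := lt_of_le_of_ne hmt (fun h => htFs (h ▸ hmsFs))
          have hxle : (x : ℕ) ≤ (ms : ℕ) := by
            have := Finset.le_sup (f := fun x : Fin n => (x : ℕ)) hx
            rwa [hms] at this
          exact lt_of_le_of_lt (Fin.mk_le_mk.mpr hxle) hmst
      have hun : F ∩ Fs ∪ F \ Fs = F := by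
        ext x; simp only [Finset.mem_union, Finset.mem_inter, Finset.mem_sdiff]; tauto
      have := closure_star hC hs (F \ Fs).card (F \ Fs) Fs (F ∩ Fs) rfl hFsC
        Finset.inter_subset_right hT
        (by rw [hun]; exact hFcard)
      rwa [hun] at this
    -- the deleted clutter
    have hC'sub : delMS C e ⊆ C := Finset.filter_subset _ _
    have hFsnot : Fs ∉ delMS C e := by
      simp only [delMS, Finset.mem_filter, not_and, not_not]
      intro _
      exact Finset.erase_subset _ _
    have hcard' : (delMS C e).card < C.card :=
      Finset.card_lt_card ((Finset.ssubset_iff_of_subset hC'sub).mpr ⟨Fs, hFsC, hFsnot⟩)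
    have hstar' : StarClo (delMS C e) := by
      intro G hG' j hj mm hmm
      obtain ⟨hGC, hneG⟩ := Finset.mem_filter.mp hG'
      have hG'' : insert mm (G.erase j) ∈ C := hs G hGC j hj mm hmm
      refine Finset.mem_filter.mpr ⟨hG'', ?_⟩
      intro hsub
      by_cases hmse : mm ∈ e
      · have hGne : G.Nonempty := Finset.card_pos.mp (by rw [hC G hGC]; omega)
        obtain ⟨g, hgG, hgsup⟩ := Finset.exists_mem_eq_sup G hGne (fun x : Fin n => (x : ℕ))
        have h1 : (ms : ℕ) ≤ (g : ℕ) := by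
          have := hsupG G hGC; rw [hgsup] at this; exact this
        have h2 : (mm : ℕ) < (ms : ℕ) := helt mm hmse
        have h3 : g < mm := hmm g hgG
        have := Fin.lt_def.mp h3
        omega
      · apply hneG
        intro x hx
        rcases Finset.mem_insert.mp (hsub hx) with h | h
        · exact absurd (h ▸ hx) hmse
        · exact Finset.mem_of_mem_erase h
    have hC' : ∀ F ∈ delMS C e, F.card = d + 1 := fun F hF => hC F (hC'sub hF)
    obtain ⟨l, hl1, hl2⟩ := ih (delMS C e) (by omega) hC' hstar'
    refine ⟨e :: l, ?_, hl2⟩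
    intro i hi
    cases i with
    | zero => exact hSMS
    | succ i =>
      have : i < l.length := by simpa using hi
      exact hl1 i this

theorem stmt4 (n d : ℕ) (C : Finset (Finset (Fin n)))
    (hC : ∀ F ∈ C, F.card = d + 1) (hne : C.Nonempty)
    (hst : SqfreeStable (dCompl d C)) :
    Chordal d C := by
  exact chordal_of_star d C.card C le_rfl hC (star_of_stable hC hst)
end

section
/- Let C be a nonempty d-dimensional uniform clutter on [n] with I(complement of C) polymatroidal (equivalently, the complement clutter satisfies the exchange property). If the complement of C is nonempty and there exists a d-subset e that is a maximal subcircuit of both C and of the complement of C, and the complement satisfies the symmetric exchange property, then e is a simplicial maximal subcircuit of C. -/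
open Finset

variable {n : ℕ}

theorem stmt7 (n d : ℕ) (C : Finset (Finset (Fin n)))
    (hC : ∀ F ∈ C, F.card = d + 1) (hCne : C.Nonempty)
    (hBne : (dCompl d C).Nonempty)
    (hex : ∀ A ∈ dCompl d C, ∀ F ∈ dCompl d C, ∀ i ∈ A \ F,
        ∃ j ∈ F \ A, insert j (A.erase i) ∈ dCompl d C)
    (hsym : ∀ A ∈ dCompl d C, ∀ F ∈ dCompl d C, ∀ i ∈ A \ F,
        ∃ j ∈ F \ A, insert j (A.erase i) ∈ dCompl d C ∧ insert i (F.erase j) ∈ dCompl d C)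
    (e : Finset (Fin n)) (hecard : e.card = d)
    (heC : ∃ F ∈ C, e ⊆ F) (heB : ∃ F ∈ dCompl d C, e ⊆ F) :
    IsSMS d C e := by
  refine ⟨hecard, heC, ?_⟩
  intro F hFsub hFcard
  by_contra hFC
  have hFB : F ∈ dCompl d C := by
    simp [dCompl, hFcard, hFC]
  obtain ⟨G, hGB, heG⟩ := heB
  have hGcard : G.card = d + 1 := by
    simp only [dCompl, mem_filter] at hGB
    exact hGB.2.1
  have hGC : G ∉ C := by
    simp only [dCompl, mem_filter] at hGB
    exact hGB.2.2
  obtain ⟨w, hw⟩ : ∃ w, G \ e = {w} :=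
    Finset.card_eq_one.mp (by rw [card_sdiff_of_subset heG, hGcard, hecard]; omega)
  have hwG : w ∈ G ∧ w ∉ e := by
    have := hw ▸ Finset.mem_singleton_self w
    exact ⟨(Finset.mem_sdiff.mp this).1, (Finset.mem_sdiff.mp this).2⟩
  have hGeq : G = insert w e := by
    apply Finset.eq_of_subset_of_card_le
    · intro x hx
      by_cases hxe : x ∈ e
      · exact Finset.mem_insert_of_mem hxe
      · have : x ∈ G \ e := Finset.mem_sdiff.mpr ⟨hx, hxe⟩
        rw [hw, Finset.mem_singleton] at this
        simp [this]
    · rw [Finset.card_insert_of_notMem hwG.2, hecard, hGcard]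
  have hwN : w ∉ nbhd C e := by
    simp only [nbhd, Finset.mem_union, Finset.mem_filter]
    push_neg
    refine ⟨hwG.2, fun _ h => ?_⟩
    exact hGC (hGeq ▸ h)
  have hwF : w ∉ F := fun h => hwN (hFsub h)
  obtain ⟨j, hj, hjB⟩ := hex G hGB F hFB w (Finset.mem_sdiff.mpr ⟨hwG.1, hwF⟩)
  rw [Finset.mem_sdiff] at hj
  have hje : j ∉ e := fun h => hj.2 (heG h)
  have hGE : G.erase w = e := by
    rw [hGeq, Finset.erase_insert hwG.2]
  rw [hGE] at hjB
  have hjN : j ∈ nbhd C e := hFsub hj.1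
  simp only [nbhd, Finset.mem_union, Finset.mem_filter] at hjN
  have hjC : insert j e ∈ C := by
    rcases hjN with h | h
    · exact absurd h hje
    · exact h.2
  simp only [dCompl, mem_filter] at hjB
  exact hjB.2.2 hjC
end

section
/- Let C be a d-dimensional uniform clutter, e a maximal subcircuit of C, and G an unmixed graph on vertex set [n] with no isolated vertices such that every minimal generator of I(complement of (C − e)) is of the form x_A for A a minimal vertex cover of G. Then n = d + 2 and G is a complete graph. -/
open Finset

variable {n : ℕ}

theorem stmt8 (n d : ℕ) (C : Finset (Finset (Fin n)))
    (hC : ∀ F ∈ C, F.card = d + 1)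
    (e : Finset (Fin n)) (hecard : e.card = d) (heMS : ∃ F ∈ C, e ⊆ F)
    (G : SimpleGraph (Fin n))
    (hunmixed : ∀ A B : Finset (Fin n), IsMinVC G A → IsMinVC G B → A.card = B.card)
    (hnoiso : ∀ v : Fin n, ∃ u, G.Adj v u)
    (hcov : ∀ F : Finset (Fin n), F.card = d + 1 → F ∉ delMS C e → IsMinVC G F) :
    n = d + 2 ∧ G = ⊤ := by
  classical
  obtain ⟨F₀, hF₀C, heF₀⟩ := heMS
  have hF₀card := hC F₀ hF₀C
  have hF₀min : IsMinVC G F₀ := by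
    apply hcov F₀ hF₀card
    simp [delMS, heF₀]
  have minvc : ∀ v : Fin n, v ∉ e → IsMinVC G (insert v e) := by
    intro v hv
    apply hcov
    · rw [Finset.card_insert_of_notMem hv, hecard]
    · simp [delMS, Finset.subset_insert]
  have nbr : ∀ A : Finset (Fin n), IsMinVC G A → ∀ x ∈ A, ∃ w, G.Adj x w ∧ w ∉ A := by
    intro A hA x hx
    have hss : A.erase x ⊂ A := Finset.erase_ssubset hx
    have hnv := hA.2 _ hss
    rw [IsVC] at hnv
    push_neg at hnv
    obtain ⟨u, w, huw, hu, hw⟩ := hnv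
    rcases hA.1 u w huw with h | h
    · have hux : u = x := by
        by_contra hne; exact hu (Finset.mem_erase.mpr ⟨hne, h⟩)
      subst hux
      exact ⟨w, huw, fun hwA => hw (Finset.mem_erase.mpr ⟨huw.ne', hwA⟩)⟩
    · have hwx : w = x := by
        by_contra hne; exact hw (Finset.mem_erase.mpr ⟨hne, h⟩)
      subst hwx
      exact ⟨u, huw.symm, fun hwA => hu (Finset.mem_erase.mpr ⟨huw.ne, hwA⟩)⟩
  have hn1 : d + 1 ≤ n := by
    have h := Finset.card_le_card (Finset.subset_univ F₀)
    simpa [hF₀card] using h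
  have hn2 : d + 2 ≤ n := by
    rcases lt_or_eq_of_le hn1 with h | h
    · omega
    · exfalso
      have huniv : F₀ = Finset.univ := Finset.eq_univ_of_card _ (by simp [hF₀card, ← h])
      have hpos : 0 < n := by omega
      have u : Fin n := ⟨0, hpos⟩
      have hB : IsVC G (F₀.erase u) := by
        intro a b hab
        by_cases ha : a = u
        · right; subst ha; rw [huniv]
          exact Finset.mem_erase.mpr ⟨hab.ne', Finset.mem_univ _⟩
        · left; rw [huniv]; exact Finset.mem_erase.mpr ⟨ha, Finset.mem_univ _⟩
      exact hF₀min.2 _ (Finset.erase_ssubset (by rw [huniv]; exact Finset.mem_univ u)) hB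
  have hn3 : n ≤ d + 2 := by
    by_contra h
    push_neg at h
    have hcompl : (Finset.univ \ e).Nonempty := by
      rw [← Finset.card_pos, Finset.card_sdiff_of_subset (Finset.subset_univ _)]
      simp only [Finset.card_univ, Fintype.card_fin, hecard]
      omega
    obtain ⟨v, hv⟩ := hcompl
    have hve : v ∉ e := (Finset.mem_sdiff.mp hv).2
    obtain ⟨w, hvw, hwS⟩ := nbr _ (minvc v hve) v (Finset.mem_insert_self v e)
    have hzne : (Finset.univ \ insert w (insert v e)).Nonempty := by
      rw [← Finset.card_pos, Finset.card_sdiff_of_subset (Finset.subset_univ _)]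
      have h1 : (insert w (insert v e)).card ≤ d + 2 := by
        calc (insert w (insert v e)).card ≤ (insert v e).card + 1 :=
              Finset.card_insert_le _ _
        _ ≤ (e.card + 1) + 1 := by
              have := Finset.card_insert_le v e; omega
        _ = d + 2 := by rw [hecard]
      simp only [Finset.card_univ, Fintype.card_fin]
      omega
    obtain ⟨z, hz⟩ := hzne
    have hz' := Finset.mem_sdiff.mp hz
    have hze : z ∉ e := fun hh =>
      hz'.2 (Finset.mem_insert_of_mem (Finset.mem_insert_of_mem hh))
    have hSz := (minvc z hze).1
    rcases hSz v w hvw with h' | h'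
    · rcases Finset.mem_insert.mp h' with h'' | h''
      · exact hz'.2 (h'' ▸ Finset.mem_insert_of_mem (Finset.mem_insert_self _ _))
      · exact hve h''
    · rcases Finset.mem_insert.mp h' with h'' | h''
      · exact hz'.2 (h'' ▸ Finset.mem_insert_self _ _)
      · exact hwS (Finset.mem_insert_of_mem h'')
  have hn : n = d + 2 := le_antisymm hn3 hn2
  refine ⟨hn, ?_⟩
  ext u v
  simp only [SimpleGraph.top_adj]
  constructor
  · exact fun h => h.ne
  · intro huv
    by_contra hadj
    set B := Finset.univ \ ({u, v} : Finset (Fin n)) with hBdef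
    have memB : ∀ a : Fin n, a ∈ B ↔ a ≠ u ∧ a ≠ v := by
      intro a; simp [hBdef, not_or]
    have hBVC : IsVC G B := by
      intro a b hab
      by_cases hau : a = u
      · subst hau
        right; rw [memB]
        refine ⟨fun hh => hab.ne hh.symm, fun hh => hadj (hh ▸ hab)⟩
      · by_cases hav : a = v
        · subst hav
          right; rw [memB]
          refine ⟨fun hh => hadj (hh ▸ hab).symm, fun hh => hab.ne hh.symm⟩
        · left; rw [memB]; exact ⟨hau, hav⟩
    have hBne : B ∈ (B.powerset).filter (fun A => IsVC G A) := by
      simp [hBVC]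
    obtain ⟨m, hm, hmin⟩ := Finset.exists_minimal ⟨B, hBne⟩
    have hmVC : IsVC G m := (Finset.mem_filter.mp hm).2
    have hmB : m ⊆ B := Finset.mem_powerset.mp (Finset.mem_filter.mp hm).1
    have hmMin : IsMinVC G m := by
      refine ⟨hmVC, fun B' hB' hB'VC => ?_⟩
      exact hB'.2 (hmin (Finset.mem_filter.mpr
        ⟨Finset.mem_powerset.mpr (hB'.subset.trans hmB), hB'VC⟩) hB'.1)
    have hcard := hunmixed m F₀ hmMin hF₀min
    have hmle : m.card ≤ B.card := Finset.card_le_card hmB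
    have hBcard : B.card = n - 2 := by
      rw [hBdef, Finset.card_sdiff_of_subset (Finset.subset_univ _)]
      simp [Finset.card_pair huv]
    omega
end

section
/- Let C be a d-dimensional CF-tree (a nonempty d-clutter with no CF-cycle). Then a maximal subcircuit e of C is simplicial if and only if deg_C(e) = 1 (e is free). -/
open Finset

variable {n : ℕ}

lemma complete_cfcycle {n : ℕ} (d : ℕ) (A : Finset (Fin n)) (hA : A.card = d + 2) :
    CFCycle d (Finset.powersetCard (d + 1) A) := by
  refine ⟨?_, ?_, ?_⟩
  · rw [Finset.powersetCard_nonempty]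
    omega
  · intro F hF G hG
    apply Relation.ReflTransGen.single
    have hF' := hF; have hG' := hG
    rw [Finset.mem_powersetCard] at hF' hG'
    refine ⟨hF, hG, ?_⟩
    have h1 : (F ∩ G).card + (F ∪ G).card = F.card + G.card :=
      Finset.card_inter_add_card_union F G
    have h2 : (F ∪ G).card ≤ A.card :=
      Finset.card_le_card (Finset.union_subset hF'.1 hG'.1)
    omega
  · rintro e' he' ⟨F, hF, heF⟩
    rw [Finset.mem_powersetCard] at hF
    have heA : e' ⊆ A := heF.trans hF.1
    have key : (Finset.powersetCard (d + 1) A).filter (fun G => e' ⊆ G)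
        = (A \ e').image (fun x => insert x e') := by
      ext G
      simp only [Finset.mem_filter, Finset.mem_powersetCard, Finset.mem_image,
        Finset.mem_sdiff]
      constructor
      · rintro ⟨⟨hGA, hGc⟩, hEG⟩
        have hne : (G \ e').Nonempty := by
          rw [← Finset.card_pos, Finset.card_sdiff_of_subset hEG]; omega
        obtain ⟨x, hx⟩ := hne
        rw [Finset.mem_sdiff] at hx
        refine ⟨x, ⟨hGA hx.1, hx.2⟩, ?_⟩
        exact Finset.eq_of_subset_of_card_le (Finset.insert_subset hx.1 hEG)
          (by rw [Finset.card_insert_of_notMem hx.2, he', hGc])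
      · rintro ⟨x, ⟨hxA, hxe⟩, rfl⟩
        exact ⟨⟨Finset.insert_subset hxA heA,
          by rw [Finset.card_insert_of_notMem hxe, he']⟩, Finset.subset_insert _ _⟩
    have hinj : Set.InjOn (fun x => insert x e') ((A \ e') : Finset (Fin n)) := by
      intro x hx y hy hxy
      simp only [Finset.coe_sdiff, Set.mem_diff, Finset.mem_coe] at hx hy
      have : x ∈ insert y e' := by
        have hxy' : insert x e' = insert y e' := hxy
        rw [← hxy']; exact Finset.mem_insert_self x e'
      rcases Finset.mem_insert.mp this with h | h
      · exact h
      · exact absurd h hx.2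
    have hcard : (A \ e').card = 2 := by
      rw [Finset.card_sdiff_of_subset heA, hA, he']; omega
    unfold degC
    rw [key, Finset.card_image_of_injOn hinj, hcard]
    exact ⟨1, rfl⟩

theorem stmt13 (n d : ℕ) (C : Finset (Finset (Fin n)))
    (hC : ∀ F ∈ C, F.card = d + 1) (hne : C.Nonempty)
    (htree : ∀ Z ⊆ C, ¬ CFCycle d Z)
    (e : Finset (Fin n)) (hecard : e.card = d) (heMS : ∃ F ∈ C, e ⊆ F) :
    IsSMS d C e ↔ degC C e = 1 := by
  constructor
  · rintro ⟨_, _, hclique⟩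
    by_contra hdeg
    obtain ⟨F0, hF0, heF0⟩ := heMS
    have h1 : 1 ≤ degC C e := Finset.card_pos.mpr
      ⟨F0, Finset.mem_filter.mpr ⟨hF0, heF0⟩⟩
    have h2 : 1 < degC C e := lt_of_le_of_ne h1 (Ne.symm hdeg)
    obtain ⟨F1, hF1, F2, hF2, hF12⟩ := Finset.one_lt_card.mp h2
    rw [Finset.mem_filter] at hF1 hF2
    have hgen : ∀ F ∈ C, e ⊆ F → ∃ x, x ∉ e ∧ F = insert x e := by
      intro F hF heF
      have hne2 : (F \ e).Nonempty := by
        rw [← Finset.card_pos, Finset.card_sdiff_of_subset heF, hC F hF, hecard]; omega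
      obtain ⟨x, hx⟩ := hne2
      rw [Finset.mem_sdiff] at hx
      refine ⟨x, hx.2, ?_⟩
      exact (Finset.eq_of_subset_of_card_le (Finset.insert_subset hx.1 heF)
        (by rw [Finset.card_insert_of_notMem hx.2, hecard, hC F hF])).symm
    obtain ⟨v, hve, hFv⟩ := hgen F1 hF1.1 hF1.2
    obtain ⟨w, hwe, hFw⟩ := hgen F2 hF2.1 hF2.2
    have hvw : v ≠ w := by
      rintro rfl; exact hF12 (hFv.trans hFw.symm)
    set A : Finset (Fin n) := insert v (insert w e) with hA
    have hAcard : A.card = d + 2 := by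
      rw [hA, Finset.card_insert_of_notMem (by
          simp only [Finset.mem_insert]; push_neg; exact ⟨hvw, hve⟩),
        Finset.card_insert_of_notMem hwe, hecard]
    have hAnbhd : A ⊆ nbhd C e := by
      intro u hu
      rw [hA] at hu
      unfold nbhd
      rcases Finset.mem_insert.mp hu with rfl | hu
      · exact Finset.mem_union_right _ (Finset.mem_filter.mpr
          ⟨Finset.mem_univ _, hFv ▸ hF1.1⟩)
      rcases Finset.mem_insert.mp hu with rfl | hu
      · exact Finset.mem_union_right _ (Finset.mem_filter.mpr
          ⟨Finset.mem_univ _, hFw ▸ hF2.1⟩)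
      · exact Finset.mem_union_left _ hu
    have hZC : Finset.powersetCard (d + 1) A ⊆ C := by
      intro G hG
      rw [Finset.mem_powersetCard] at hG
      exact hclique G (hG.1.trans hAnbhd) hG.2
    exact htree _ hZC (complete_cfcycle d A hAcard)
  · intro hdeg
    obtain ⟨F, hFeq⟩ := Finset.card_eq_one.mp hdeg
    have hF : F ∈ C ∧ e ⊆ F := by
      have : F ∈ C.filter (fun G => e ⊆ G) := by rw [hFeq]; exact Finset.mem_singleton_self F
      exact Finset.mem_filter.mp this
    refine ⟨hecard, heMS, ?_⟩
    intro G hG hGcard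
    have hnbhd : nbhd C e ⊆ F := by
      intro u hu
      rcases Finset.mem_union.mp hu with hu | hu
      · exact hF.2 hu
      · rw [Finset.mem_filter] at hu
        have hmem : insert u e ∈ C.filter (fun G => e ⊆ G) :=
          Finset.mem_filter.mpr ⟨hu.2, Finset.subset_insert _ _⟩
        rw [hFeq, Finset.mem_singleton] at hmem
        rw [← hmem]
        exact Finset.mem_insert_self u e
    have : G = F := Finset.eq_of_subset_of_card_le (hG.trans hnbhd)
      (by rw [hGcard, hC F hF.1])
    exact this ▸ hF.1
end

section
/- If C is a d-dimensional CF-cycle, then C contains at least d+2 circuits. -/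
open Finset

variable {n : ℕ}

theorem stmt15 (n d : ℕ) (C : Finset (Finset (Fin n)))
    (hC : ∀ F ∈ C, F.card = d + 1) (hcyc : CFCycle d C) :
    d + 2 ≤ C.card := by
  obtain ⟨⟨F, hF⟩, hconn, heven⟩ := hcyc
  have hFcard := hC F hF
  have key : ∀ e ∈ F.powersetCard d, ∃ G ∈ C, e ⊆ G ∧ G ≠ F := by
    intro e he
    rw [Finset.mem_powersetCard] at he
    have hev := heven e he.2 ⟨F, hF, he.1⟩
    have h1 : F ∈ C.filter (fun G => e ⊆ G) := Finset.mem_filter.2 ⟨hF, he.1⟩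
    have h2 : 2 ≤ degC C e := by
      rcases hev with ⟨k, hk⟩
      have : 0 < degC C e := Finset.card_pos.2 ⟨F, h1⟩
      omega
    by_contra h
    push_neg at h
    have hsub : C.filter (fun G => e ⊆ G) ⊆ {F} := by
      intro x hx
      rw [Finset.mem_filter] at hx
      exact Finset.mem_singleton.2 (h x hx.1 hx.2)
    have := Finset.card_le_card hsub
    simp only [Finset.card_singleton] at this
    unfold degC at h2
    omega
  choose φ hφC hφsub hφne using key
  set S : Finset (Finset (Fin n)) :=
    (F.powersetCard d).attach.image (fun x => φ x.1 x.2) with hS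
  have hinj : ∀ x ∈ (F.powersetCard d).attach, ∀ y ∈ (F.powersetCard d).attach,
      φ x.1 x.2 = φ y.1 y.2 → x = y := by
    rintro ⟨e, he⟩ - ⟨e', he'⟩ - hxy
    by_contra hne
    have hee' : e ≠ e' := fun h => hne (by simpa using h)
    have he1 := Finset.mem_powersetCard.1 he
    have he1' := Finset.mem_powersetCard.1 he'
    have hunion : e ∪ e' = F := by
      apply Finset.eq_of_subset_of_card_le (Finset.union_subset he1.1 he1'.1)
      have hssub : e ⊂ e ∪ e' := by
        refine ⟨Finset.subset_union_left, fun hcon => ?_⟩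
        have : e' ⊆ e := Finset.union_subset_iff.1 hcon |>.2
        exact hee' (Finset.eq_of_subset_of_card_le this (le_of_eq (he1.2.trans he1'.2.symm))).symm
      have := Finset.card_lt_card hssub
      omega
    have hGF : F ⊆ φ e he := by
      rw [← hunion]
      exact Finset.union_subset (hφsub e he) (hxy ▸ hφsub e' he')
    have : F = φ e he :=
      Finset.eq_of_subset_of_card_le hGF (le_of_eq ((hC _ (hφC e he)).trans hFcard.symm))
    exact hφne e he this.symm
  have hScard : S.card = d + 1 := by
    rw [hS, Finset.card_image_of_injOn hinj, Finset.card_attach,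
      Finset.card_powersetCard, hFcard, Nat.choose_succ_self_right]
  have hFS : F ∉ S := by
    intro hcon
    rw [hS, Finset.mem_image] at hcon
    obtain ⟨x, -, hx⟩ := hcon
    exact hφne x.1 x.2 hx
  have hsubC : insert F S ⊆ C := by
    intro x hx
    rcases Finset.mem_insert.1 hx with h | h
    · exact h ▸ hF
    · rw [hS, Finset.mem_image] at h
      obtain ⟨y, -, hy⟩ := h
      exact hy ▸ hφC y.1 y.2
  have := Finset.card_le_card hsubC
  rw [Finset.card_insert_of_notMem hFS, hScard] at this
  omega
end

section
/- Let C be a strongly connected d-dimensional uniform clutter such that deg_C(e) = 2 for every maximal subcircuit e. Then C is a C₁-cycle: either C is the complete clutter on d+2 vertices, or C has no simplicial maximal subcircuit while every nonempty proper subfamily C' ⊊ C has a simplicial maximal subcircuit. -/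
open Finset

variable {n : ℕ}

lemma filter_eq_pair {C : Finset (Finset (Fin n))} {e A B : Finset (Fin n)}
    (hdeg : degC C e = 2) (hA : A ∈ C) (hB : B ∈ C) (hAB : A ≠ B)
    (heA : e ⊆ A) (heB : e ⊆ B) :
    C.filter (fun F => e ⊆ F) = {A, B} := by
  refine (Finset.eq_of_subset_of_card_le ?_ ?_).symm
  · intro x hx
    rcases Finset.mem_insert.mp hx with rfl | hx
    · exact Finset.mem_filter.mpr ⟨hA, heA⟩
    · rw [Finset.mem_singleton] at hx; subst hx
      exact Finset.mem_filter.mpr ⟨hB, heB⟩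
  · rw [Finset.card_pair hAB]
    exact le_of_eq hdeg

lemma proper_has_sms (d : ℕ) {C Z' : Finset (Finset (Fin n))}
    (hC : ∀ F ∈ C, F.card = d + 1)
    (hsc : StronglyConnected d C)
    (hdeg : ∀ e : Finset (Fin n), e.card = d → (∃ F ∈ C, e ⊆ F) → degC C e = 2)
    (hZC : Z' ⊆ C) (hne : Z' ≠ C) (hZne : Z'.Nonempty) :
    ∃ e, IsSMS d Z' e := by
  obtain ⟨A0, hA0⟩ := hZne
  obtain ⟨B0, hB0C, hB0⟩ := Finset.exists_of_ssubset (hZC.ssubset_of_ne hne)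
  have key : ∃ A B : Finset (Fin n), A ∈ Z' ∧ B ∈ C ∧ B ∉ Z' ∧ d ≤ (A ∩ B).card := by
    have chain := hsc A0 (hZC hA0) B0 hB0C
    have main : B0 ∈ Z' ∨
        ∃ A B, A ∈ Z' ∧ B ∈ C ∧ B ∉ Z' ∧ d ≤ (A ∩ B).card := by
      clear hB0 hB0C
      induction chain with
      | refl => exact Or.inl hA0
      | @tail b c _ hrel ih =>
        rcases ih with hb | h
        · by_cases hc : c ∈ Z'
          · exact Or.inl hc
          · exact Or.inr ⟨b, c, hb, hrel.2.1, hc, hrel.2.2⟩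
        · exact Or.inr h
    rcases main with h | h
    · exact absurd h hB0
    · exact h
  obtain ⟨A, B, hAZ, hBC, hBZ, hcard⟩ := key
  obtain ⟨e, heAB, hecard⟩ := Finset.exists_subset_card_eq hcard
  have heA : e ⊆ A := heAB.trans Finset.inter_subset_left
  have heB : e ⊆ B := heAB.trans Finset.inter_subset_right
  have hAB : A ≠ B := fun h => hBZ (h ▸ hAZ)
  have hfil : C.filter (fun F => e ⊆ F) = {A, B} :=
    filter_eq_pair (hdeg e hecard ⟨A, hZC hAZ, heA⟩) (hZC hAZ) hBC hAB heA heB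
  have huniq : ∀ F ∈ Z', e ⊆ F → F = A := by
    intro F hF heF
    have hm : F ∈ ({A, B} : Finset (Finset (Fin n))) :=
      hfil ▸ Finset.mem_filter.mpr ⟨hZC hF, heF⟩
    rcases Finset.mem_insert.mp hm with rfl | h
    · rfl
    · rw [Finset.mem_singleton] at h
      exact absurd (h ▸ hF) hBZ
  have hnb : nbhd Z' e = A := by
    apply Finset.Subset.antisymm
    · intro x hx
      rcases Finset.mem_union.mp hx with hx | hx
      · exact heA hx
      · have hm := (Finset.mem_filter.mp hx).2
        have hxA : insert x e = A := huniq _ hm (Finset.subset_insert _ _)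
        exact hxA ▸ Finset.mem_insert_self x e
    · intro x hx
      by_cases hxe : x ∈ e
      · exact Finset.mem_union_left _ hxe
      · refine Finset.mem_union_right _ (Finset.mem_filter.mpr ⟨Finset.mem_univ _, ?_⟩)
        have hsub : insert x e ⊆ A := Finset.insert_subset hx heA
        have hcle : A.card ≤ (insert x e).card := by
          rw [Finset.card_insert_of_notMem hxe, hecard, hC A (hZC hAZ)]
        rw [Finset.eq_of_subset_of_card_le hsub hcle]
        exact hAZ
  refine ⟨e, hecard, ⟨A, hAZ, heA⟩, ?_⟩
  rw [hnb]
  intro F hFA hFcard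
  have hcle : A.card ≤ F.card := by rw [hFcard, hC A (hZC hAZ)]
  rw [Finset.eq_of_subset_of_card_le hFA hcle]
  exact hAZ

lemma sms_case (d : ℕ) {C : Finset (Finset (Fin n))}
    (hC : ∀ F ∈ C, F.card = d + 1)
    (hsc : StronglyConnected d C)
    (hdeg : ∀ e : Finset (Fin n), e.card = d → (∃ F ∈ C, e ⊆ F) → degC C e = 2)
    (e : Finset (Fin n)) (he : IsSMS d C e) :
    ∃ A : Finset (Fin n), A.card = d + 2 ∧ C = Finset.powersetCard (d + 1) A := by
  obtain ⟨hecard, ⟨F0, hF0, heF0⟩, hclique⟩ := he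
  set K := nbhd C e with hK
  have heK : e ⊆ K := Finset.subset_union_left
  have hnotC : e ∉ C := fun h => by
    have := hC e h; omega
  have hmemK : ∀ F ∈ C, e ⊆ F → F ⊆ K := by
    intro F hF heF x hx
    by_cases hxe : x ∈ e
    · exact heK hxe
    · have hsub : insert x e ⊆ F := Finset.insert_subset hx heF
      have hcle : F.card ≤ (insert x e).card := by
        rw [Finset.card_insert_of_notMem hxe, hecard, hC F hF]
      have : insert x e = F := Finset.eq_of_subset_of_card_le hsub hcle
      refine Finset.mem_union_right _ (Finset.mem_filter.mpr ⟨Finset.mem_univ _, ?_⟩)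
      rw [this]; exact hF
  have hSe : ∀ v ∈ Finset.univ.filter (fun v => insert v e ∈ C), v ∉ e := by
    intro v hv hve
    have := (Finset.mem_filter.mp hv).2
    rw [Finset.insert_eq_self.mpr hve] at this
    exact hnotC this
  have hScard : (Finset.univ.filter (fun v => insert v e ∈ C)).card = 2 := by
    have hdeg2 := hdeg e hecard ⟨F0, hF0, heF0⟩
    rw [← hdeg2]
    apply Finset.card_bij (fun v _ => insert v e)
    · intro v hv
      exact Finset.mem_filter.mpr ⟨(Finset.mem_filter.mp hv).2, Finset.subset_insert _ _⟩
    · intro a ha b hb hab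
      have haE := hSe a ha
      have : a ∈ insert b e := hab ▸ Finset.mem_insert_self a e
      rcases Finset.mem_insert.mp this with h | h
      · exact h
      · exact absurd h haE
    · intro F hF
      obtain ⟨hFC, heF⟩ := Finset.mem_filter.mp hF
      have hss : e ⊂ F := Finset.ssubset_iff_subset_ne.mpr ⟨heF, fun h => hnotC (h.symm ▸ hFC)⟩
      obtain ⟨v, hvF, hve⟩ := Finset.exists_of_ssubset hss
      refine ⟨v, Finset.mem_filter.mpr ⟨Finset.mem_univ _, ?_⟩, ?_⟩
      · have hsub : insert v e ⊆ F := Finset.insert_subset hvF heF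
        have hcle : F.card ≤ (insert v e).card := by
          rw [Finset.card_insert_of_notMem hve, hecard, hC F hFC]
        rw [Finset.eq_of_subset_of_card_le hsub hcle]; exact hFC
      · have hsub : insert v e ⊆ F := Finset.insert_subset hvF heF
        have hcle : F.card ≤ (insert v e).card := by
          rw [Finset.card_insert_of_notMem hve, hecard, hC F hFC]
        exact Finset.eq_of_subset_of_card_le hsub hcle
  have hKcard : K.card = d + 2 := by
    rw [hK, nbhd, Finset.card_union_of_disjoint, hecard, hScard]
    exact Finset.disjoint_left.mpr (fun v hv hv' => hSe v hv' hv)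
  have hstep : ∀ A B : Finset (Fin n), A ⊆ K → shareRel d C A B → B ⊆ K := by
    intro A B hAK hrel
    obtain ⟨hAC, hBC, hcard⟩ := hrel
    obtain ⟨f, hfAB, hfcard⟩ := Finset.exists_subset_card_eq hcard
    have hfA : f ⊆ A := hfAB.trans Finset.inter_subset_left
    have hfB : f ⊆ B := hfAB.trans Finset.inter_subset_right
    have hfK : f ⊆ K := hfA.trans hAK
    have hKfcard : (K \ f).card = 2 := by
      rw [Finset.card_sdiff_of_subset hfK, hKcard, hfcard]
      omega
    obtain ⟨x, y, hxy, hxyK⟩ := Finset.card_eq_two.mp hKfcard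
    have hxK : x ∈ K \ f := by rw [hxyK]; exact Finset.mem_insert_self _ _
    have hyK : y ∈ K \ f := by rw [hxyK]; simp
    obtain ⟨hxK', hxf⟩ := Finset.mem_sdiff.mp hxK
    obtain ⟨hyK', hyf⟩ := Finset.mem_sdiff.mp hyK
    have hG1sub : insert x f ⊆ K := Finset.insert_subset hxK' hfK
    have hG2sub : insert y f ⊆ K := Finset.insert_subset hyK' hfK
    have hG1card : (insert x f).card = d + 1 := by
      rw [Finset.card_insert_of_notMem hxf, hfcard]
    have hG2card : (insert y f).card = d + 1 := by
      rw [Finset.card_insert_of_notMem hyf, hfcard]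
    have hG1 : insert x f ∈ C := hclique _ hG1sub hG1card
    have hG2 : insert y f ∈ C := hclique _ hG2sub hG2card
    have hG12 : insert x f ≠ insert y f := by
      intro h
      have : x ∈ insert y f := h ▸ Finset.mem_insert_self x f
      rcases Finset.mem_insert.mp this with h' | h'
      · exact hxy h'
      · exact hxf h'
    have hfil : C.filter (fun F => f ⊆ F) = {insert x f, insert y f} :=
      filter_eq_pair (hdeg f hfcard ⟨A, hAC, hfA⟩) hG1 hG2 hG12
        (Finset.subset_insert _ _) (Finset.subset_insert _ _)
    have hBm : B ∈ ({insert x f, insert y f} : Finset (Finset (Fin n))) :=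
      hfil ▸ Finset.mem_filter.mpr ⟨hBC, hfB⟩
    rcases Finset.mem_insert.mp hBm with h | h
    · rw [h]; exact hG1sub
    · rw [Finset.mem_singleton] at h; rw [h]; exact hG2sub
  have hall : ∀ F ∈ C, F ⊆ K := by
    intro F hF
    have chain := hsc F0 hF0 F hF
    have hF0K : F0 ⊆ K := hmemK F0 hF0 heF0
    clear hF
    induction chain with
    | refl => exact hF0K
    | @tail b c _ hrel ih => exact hstep b c ih hrel
  refine ⟨K, hKcard, ?_⟩
  ext F
  rw [Finset.mem_powersetCard]
  constructor
  · intro hF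
    exact ⟨hall F hF, hC F hF⟩
  · intro ⟨h1, h2⟩
    exact hclique F h1 h2

theorem stmt16 (n d : ℕ) (C : Finset (Finset (Fin n)))
    (hC : ∀ F ∈ C, F.card = d + 1)
    (hsc : StronglyConnected d C)
    (hdeg : ∀ e : Finset (Fin n), e.card = d → (∃ F ∈ C, e ⊆ F) → degC C e = 2) :
    IsC1Cycle d C := by
  by_cases h : ∃ e, IsSMS d C e
  · obtain ⟨e, he⟩ := h
    exact Or.inl (sms_case d hC hsc hdeg e he)
  · exact Or.inr ⟨h, fun Z' hZC hne hZne => proper_has_sms d hC hsc hdeg hZC hne hZne⟩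
end

section
/- Let C be a chordal d-dimensional uniform clutter and v a vertex such that C − v ≠ ∅ (where C − v is the set of circuits of C not containing v). Then C − v has a simplicial maximal subcircuit. Consequently, every nonempty vertex-induced subclutter of a chordal clutter has a simplicial maximal subcircuit, i.e., no vertex-induced subclutter of a chordal clutter is a non-complete C₃-cycle. -/
open Finset

variable {n : ℕ}

lemma delMS_singleton (C : Finset (Finset (Fin n))) (v : Fin n) :
    delMS C {v} = C.filter (fun F => v ∉ F) := by
  simp [delMS, Finset.singleton_subset_iff]

lemma delMS_comm (C : Finset (Finset (Fin n))) (e f : Finset (Fin n)) :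
    delMS (delMS C e) f = delMS (delMS C f) e := by
  simp only [delMS]
  exact Finset.filter_comm _ _ _

lemma nbhd_del_subset (C : Finset (Finset (Fin n))) (e : Finset (Fin n)) (v : Fin n) :
    nbhd (delMS C {v}) e ⊆ nbhd C e := by
  apply Finset.union_subset_union_right
  intro u hu
  simp only [Finset.mem_filter, Finset.mem_univ, true_and] at hu ⊢
  exact (Finset.filter_subset _ _) hu

lemma v_not_mem_nbhd_del {C : Finset (Finset (Fin n))} {e : Finset (Fin n)} {v : Fin n}
    (hve : v ∉ e) : v ∉ nbhd (delMS C {v}) e := by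
  simp only [nbhd, Finset.mem_union, Finset.mem_filter, Finset.mem_univ, true_and,
    delMS_singleton]
  rintro (h | h)
  · exact hve h
  · exact h.2 (Finset.mem_insert_self v e)

lemma sms_delv {d : ℕ} {C : Finset (Finset (Fin n))} {e : Finset (Fin n)} {v : Fin n}
    (h : IsSMS d C e) {F : Finset (Fin n)} (hF : F ∈ delMS C {v}) (hef : e ⊆ F) :
    IsSMS d (delMS C {v}) e := by
  obtain ⟨hcard, -, hclique⟩ := h
  rw [delMS_singleton] at hF
  have hvF : v ∉ F := (Finset.mem_filter.mp hF).2
  have hve : v ∉ e := fun hv => hvF (hef hv)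
  refine ⟨hcard, ⟨F, by rw [delMS_singleton]; exact hF, hef⟩, ?_⟩
  intro G hG hGcard
  have hGC : G ∈ C := hclique G (hG.trans (nbhd_del_subset C e v)) hGcard
  rw [delMS_singleton, Finset.mem_filter]
  exact ⟨hGC, fun hvG => v_not_mem_nbhd_del hve (hG hvG)⟩

lemma chordal_aux (d : ℕ) : ∀ (l : List (Finset (Fin n))) (C : Finset (Finset (Fin n))),
    (∀ i : ℕ, i < l.length → IsSMS d (delList C (l.take i)) (l.getD i ∅)) →
    delList C l = ∅ → ∀ v : Fin n, Chordal d (delMS C {v}) := by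
  intro l
  induction l with
  | nil =>
    intro C _ h0 v
    simp only [delList, List.foldl_nil] at h0
    subst h0
    exact ⟨[], fun i hi => absurd hi (by simp), by simp [delList, delMS]⟩
  | cons e l ih =>
    intro C hl h0 v
    have he : IsSMS d C e := by
      have := hl 0 (by simp)
      simpa [delList] using this
    have hl' : ∀ i : ℕ, i < l.length →
        IsSMS d (delList (delMS C e) (l.take i)) (l.getD i ∅) := by
      intro i hi
      have := hl (i + 1) (by simpa using Nat.succ_lt_succ hi)
      simpa [delList] using this
    have h0' : delList (delMS C e) l = ∅ := by simpa [delList] using h0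
    by_cases hcase : ∃ F ∈ delMS C {v}, e ⊆ F
    · obtain ⟨F, hF, hef⟩ := hcase
      have hsms := sms_delv he hF hef
      obtain ⟨l', hl'', h0''⟩ := ih (delMS C e) hl' h0' v
      refine ⟨e :: l', ?_, ?_⟩
      · intro i hi
        match i with
        | 0 => simpa [delList] using hsms
        | j + 1 =>
          have hj : j < l'.length := by simpa using Nat.lt_of_succ_lt_succ hi
          have := hl'' j hj
          simp only [List.take_succ_cons, List.getD_cons_succ]
          show IsSMS d (delList (delMS (delMS C {v}) e) (l'.take j)) (l'.getD j ∅)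
          rwa [delMS_comm C {v} e]
        done
      · show delList (delMS (delMS C {v}) e) l' = ∅
        rwa [delMS_comm C {v} e]
    · push_neg at hcase
      have hc : ∀ F ∈ C, v ∉ F → ¬ e ⊆ F := by
        intro F hF hv
        exact hcase F (by simp [delMS, Finset.singleton_subset_iff, hF, hv])
      have heq : delMS C {v} = delMS (delMS C e) {v} := by
        ext F
        simp only [delMS, Finset.mem_filter, Finset.singleton_subset_iff]
        constructor
        · rintro ⟨hFC, hv⟩; exact ⟨⟨hFC, hc F hFC hv⟩, hv⟩
        · rintro ⟨⟨hFC, -⟩, hv⟩; exact ⟨hFC, hv⟩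
      rw [heq]
      exact ih (delMS C e) hl' h0' v

lemma chordal_delv {d : ℕ} {C : Finset (Finset (Fin n))} (h : Chordal d C) (v : Fin n) :
    Chordal d (delMS C {v}) := by
  obtain ⟨l, hl, h0⟩ := h
  exact chordal_aux d l C hl h0 v

lemma sms_of_chordal {d : ℕ} {C : Finset (Finset (Fin n))} (h : Chordal d C)
    (hne : C.Nonempty) : ∃ e, IsSMS d C e := by
  obtain ⟨l, hl, h0⟩ := h
  match l, hl, h0 with
  | [], _, h0 =>
    simp only [delList, List.foldl_nil] at h0
    exact absurd h0 (Finset.nonempty_iff_ne_empty.mp hne)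
  | e :: l, hl, _ =>
    refine ⟨e, ?_⟩
    have := hl 0 (by simp)
    simpa [delList] using this

lemma chordal_filter_list {d : ℕ} : ∀ (t : List (Fin n)) (C : Finset (Finset (Fin n))),
    Chordal d C → Chordal d (C.filter fun F => ∀ v ∈ t, v ∉ F) := by
  intro t
  induction t with
  | nil => intro C h; simpa using h
  | cons u t ih =>
    intro C h
    have : (C.filter fun F => ∀ v ∈ u :: t, v ∉ F)
        = ((delMS C {u}).filter fun F => ∀ v ∈ t, v ∉ F) := by
      rw [delMS_singleton, Finset.filter_filter]
      apply Finset.filter_congr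
      intro F _
      simp only [List.mem_cons, eq_iff_iff]
      constructor
      · intro hh; exact ⟨hh u (Or.inl rfl), fun v hv => hh v (Or.inr hv)⟩
      · rintro ⟨h1, h2⟩ v (rfl | hv)
        · exact h1
        · exact h2 v hv
    rw [this]
    exact ih (delMS C {u}) (chordal_delv h u)

lemma vtxInduced_eq (C : Finset (Finset (Fin n))) (A : Finset (Fin n)) :
    vtxInduced C A = C.filter fun F => ∀ v ∈ Aᶜ.toList, v ∉ F := by
  unfold vtxInduced
  apply Finset.filter_congr
  intro F _
  simp only [Finset.mem_toList, Finset.mem_compl, eq_iff_iff]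
  constructor
  · intro h v hv hvF; exact hv (h hvF)
  · intro h x hx; by_contra hxA; exact h x hxA hx

theorem stmt19 (n d : ℕ) (C : Finset (Finset (Fin n)))
    (hC : ∀ F ∈ C, F.card = d + 1) (hch : Chordal d C) :
    (∀ v : Fin n, (delMS C {v}).Nonempty → ∃ e, IsSMS d (delMS C {v}) e) ∧
    (∀ A : Finset (Fin n), (vtxInduced C A).Nonempty →
      ∃ e, IsSMS d (vtxInduced C A) e) := by
  constructor
  · intro v hne
    exact sms_of_chordal (chordal_delv hch v) hne
  · intro A hne
    rw [vtxInduced_eq] at hne ⊢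
    exact sms_of_chordal (chordal_filter_list _ C hch) hne
end
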